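/- Assume [C1]–[C4], and let (λ_n) be a sequence of positive random variables satisfying [D1]–[D3]. Then λ_n^{-1} ‖Σ̂_{Z,n} − Σ_Z‖_{ℓ∞} →^p 0 and P(min_{1≤i≤d} Σ̂_{Z,n}^{ii} > 0) → 1 as n → ∞. -/

import Mathlib

open Filter MeasureTheory ProbabilityTheory Matrix
open scoped Topology ENNReal NNReal

noncomputable section

/-- Entrywise ℓ∞ norm of a matrix. -/
def linf {m k : ℕ} (A : Matrix (Fin m) (Fin k) ℝ) : ℝ := ⨆ i, ⨆ j, |A i j|

/-- Entrywise ℓ2 (Frobenius) norm of a matrix. -/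
def l2 {m k : ℕ} (A : Matrix (Fin m) (Fin k) ℝ) : ℝ := Real.sqrt (∑ i, ∑ j, (A i j) ^ 2)

/-- ℓ1 norm of the off-diagonal part of a square matrix. -/
def l1off {d : ℕ} (A : Matrix (Fin d) (Fin d) ℝ) : ℝ :=
  ∑ i, ∑ j, if i = j then 0 else |A i j|

/-- The ℓw norm of a vector, w ∈ [1,∞]. -/
def vecNorm (w : ℝ≥0∞) {k : ℕ} (x : Fin k → ℝ) : ℝ :=
  if w = ⊤ then ⨆ i, |x i| else (∑ i, |x i| ^ w.toReal) ^ (1 / w.toReal)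

/-- The ℓw operator norm of a matrix. -/
def opNorm (w : ℝ≥0∞) {m k : ℕ} (A : Matrix (Fin m) (Fin k) ℝ) : ℝ :=
  sSup {c : ℝ | ∃ x : Fin k → ℝ, vecNorm w x = 1 ∧ c = vecNorm w (A.mulVec x)}

/-- Largest eigenvalue of a symmetric matrix (via the Rayleigh quotient). -/
def lamMax {d : ℕ} (A : Matrix (Fin d) (Fin d) ℝ) : ℝ :=
  sSup {c : ℝ | ∃ x : Fin d → ℝ, ∑ i, (x i) ^ 2 = 1 ∧ c = ∑ i, ∑ j, x i * A i j * x j}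

/-- Smallest eigenvalue of a symmetric matrix (via the Rayleigh quotient). -/
def lamMin {d : ℕ} (A : Matrix (Fin d) (Fin d) ℝ) : ℝ :=
  sInf {c : ℝ | ∃ x : Fin d → ℝ, ∑ i, (x i) ^ 2 = 1 ∧ c = ∑ i, ∑ j, x i * A i j * x j}

/-- s(A): number of nonzero off-diagonal entries. -/
def spars {d : ℕ} (A : Matrix (Fin d) (Fin d) ℝ) : ℕ :=
  Set.ncard {p : Fin d × Fin d | p.1 ≠ p.2 ∧ A p.1 p.2 ≠ 0}

/-- 𝔡(A): maximal number of nonzero off-diagonal entries in a column. -/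
def degree {d : ℕ} (A : Matrix (Fin d) (Fin d) ℝ) : ℕ :=
  ⨆ j : Fin d, Set.ncard {i : Fin d | i ≠ j ∧ A i j ≠ 0}

/-- `Z_n = O_p(a_n)` for random variables on a sequence of probability spaces. -/
def IsBigOp {Ω : ℕ → Type*} [∀ n, MeasurableSpace (Ω n)] (P : ∀ n, Measure (Ω n))
    (Z a : ∀ n, Ω n → ℝ) : Prop :=
  ∀ ε : ℝ, 0 < ε → ∃ M : ℝ, 0 < M ∧
    Filter.limsup (fun n => ((P n) {ω | M * a n ω < |Z n ω|}).toReal) Filter.atTop ≤ ε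

/-- `Z_n = o_p(a_n)`, i.e. `Z_n / a_n →ᵖ 0`. -/
def IsLittleOp {Ω : ℕ → Type*} [∀ n, MeasurableSpace (Ω n)] (P : ∀ n, Measure (Ω n))
    (Z a : ∀ n, Ω n → ℝ) : Prop :=
  ∀ ε : ℝ, 0 < ε →
    Filter.Tendsto (fun n => ((P n) {ω | ε * a n ω < |Z n ω|}).toReal) Filter.atTop (nhds 0)

/-- Column-wise vectorization of a square matrix. -/
def vecM {d : ℕ} (A : Matrix (Fin d) (Fin d) ℝ) : Fin (d * d) → ℝ :=
  fun k => A (finProdFinEquiv.symm k).2 (finProdFinEquiv.symm k).1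

/-- Kronecker product, reindexed to `Fin (d*d)`. -/
def kron {d : ℕ} (A B : Matrix (Fin d) (Fin d) ℝ) : Matrix (Fin (d * d)) (Fin (d * d)) ℝ :=
  Matrix.reindex finProdFinEquiv finProdFinEquiv (Matrix.kroneckerMap (· * ·) A B)

/-- J̃ := −J(Θ ⊗ Θ). -/
def tildeJ {m k : ℕ} (J : Matrix (Fin m) (Fin (k * k)) ℝ) (Θ : Matrix (Fin k) (Fin k) ℝ) :
    Matrix (Fin m) (Fin (k * k)) ℝ :=
  -(J * kron Θ Θ)

/-- Standard Gaussian measure on ℝ^k. -/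
def stdGaussianPi (k : ℕ) : Measure (Fin k → ℝ) :=
  MeasureTheory.Measure.pi fun _ => ProbabilityTheory.gaussianReal 0 1

instance (k : ℕ) : IsProbabilityMeasure (stdGaussianPi k) := by
  unfold stdGaussianPi; infer_instance

/-- diag(S)^{1/2}. -/
def diagSqrt {d : ℕ} (S : Matrix (Fin d) (Fin d) ℝ) : Matrix (Fin d) (Fin d) ℝ :=
  Matrix.diagonal fun i => Real.sqrt (S i i)

/-- Correlation matrix V⁻¹ S V⁻¹ with V = diag(S)^{1/2}. -/
def corrOf {d : ℕ} (S : Matrix (Fin d) (Fin d) ℝ) : Matrix (Fin d) (Fin d) ℝ :=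
  (diagSqrt S)⁻¹ * S * (diagSqrt S)⁻¹

/-- The weighted graphical-Lasso objective based on a covariance estimate `Sig`. -/
def objTheta {d : ℕ} (Sig : Matrix (Fin d) (Fin d) ℝ) (lam : ℝ)
    (Θ : Matrix (Fin d) (Fin d) ℝ) : ℝ :=
  Matrix.trace (Θ * Sig) - Real.log Θ.det +
    lam * ∑ i, ∑ j, if i = j then 0
      else Real.sqrt (Sig i i) * Real.sqrt (Sig j j) * |Θ i j|

/-- The graphical-Lasso objective based on a correlation estimate `R`. -/
def objK {d : ℕ} (R : Matrix (Fin d) (Fin d) ℝ) (lam : ℝ)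
    (K : Matrix (Fin d) (Fin d) ℝ) : ℝ :=
  Matrix.trace (K * R) - Real.log K.det + lam * l1off K



/-!
On the event where `Σ̂_X` is invertible, completing the square gives
`Σ̆_Z - Σ̂_Z = Δ Σ̂_X⁻¹ Δᵀ` with `Δ = Σ̂_{YX} - β Σ̂_X`. Since
`Λmin(Σ̂_X) ≥ Λmin(Σ_X) - r ‖Σ̂_X - Σ_X‖_{ℓ∞}`, [C3], [D1] and [D2] keep `Λmin(Σ̂_X)` away from `0`
with high probability, and the positive semidefinite matrix `Δ Σ̂_X⁻¹ Δᵀ` has entries at most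
`r ‖Δ‖²_{ℓ∞} / Λmin(Σ̂_X) = O_p(r λ_n²) = o_p(λ_n)`. Together with `‖Σ̆_Z - Σ_Z‖_{ℓ∞} = o_p(λ_n)`
this is the consistency. The diagonal of `Σ_Z` is at least `Λmin(Σ_Z)`, which [C2] keeps away
from `0`, while `λ_n → 0`; hence the diagonal of `Σ̂_Z` is positive with probability tending to one.
-/

section EntrywiseNorm

variable {m k : ℕ}

lemma linf_nonneg (A : Matrix (Fin m) (Fin k) ℝ) : 0 ≤ linf A :=
  Real.iSup_nonneg fun _ => Real.iSup_nonneg fun _ => abs_nonneg _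

@[simp]
lemma abs_linf (A : Matrix (Fin m) (Fin k) ℝ) : |linf A| = linf A :=
  abs_of_nonneg (linf_nonneg A)

lemma abs_apply_le_linf (A : Matrix (Fin m) (Fin k) ℝ) (i : Fin m) (j : Fin k) :
    |A i j| ≤ linf A :=
  (le_ciSup (Set.finite_range _).bddAbove j).trans
    (le_ciSup (f := fun i => ⨆ j, |A i j|) (Set.finite_range _).bddAbove i)

lemma linf_le {A : Matrix (Fin m) (Fin k) ℝ} {c : ℝ} (hc : 0 ≤ c) (h : ∀ i j, |A i j| ≤ c) :
    linf A ≤ c :=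
  Real.iSup_le (fun i => Real.iSup_le (h i) hc) hc

lemma linf_sub_comm (A B : Matrix (Fin m) (Fin k) ℝ) : linf (A - B) = linf (B - A) := by
  simp only [linf, Matrix.sub_apply, abs_sub_comm]

lemma linf_sub_le_add (A B C : Matrix (Fin m) (Fin k) ℝ) :
    linf (A - C) ≤ linf (A - B) + linf (B - C) :=
  linf_le (add_nonneg (linf_nonneg _) (linf_nonneg _)) fun i j =>
    (abs_sub_le (A i j) (B i j) (C i j)).trans <|
      add_le_add (abs_apply_le_linf (A - B) i j) (abs_apply_le_linf (B - C) i j)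

lemma dotProduct_row_self_le (A : Matrix (Fin m) (Fin k) ℝ) (i : Fin m) :
    A i ⬝ᵥ A i ≤ k * linf A ^ 2 := by
  calc A i ⬝ᵥ A i ≤ ∑ _j : Fin k, linf A ^ 2 :=
        Finset.sum_le_sum fun j _ => by
          rw [← sq, ← sq_abs]; gcongr; exact abs_apply_le_linf A i j
    _ = k * linf A ^ 2 := by simp

lemma abs_dotProduct_mulVec_le (A : Matrix (Fin k) (Fin k) ℝ) (x : Fin k → ℝ) :
    |x ⬝ᵥ A *ᵥ x| ≤ k * linf A * (x ⬝ᵥ x) := by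
  have hx : x ⬝ᵥ A *ᵥ x = ∑ i, ∑ j, x i * A i j * x j := by
    simp [dotProduct, mulVec, Finset.mul_sum, mul_assoc]
  calc |x ⬝ᵥ A *ᵥ x| ≤ ∑ i, ∑ j, |x i| * linf A * |x j| := by
        rw [hx]
        refine (Finset.abs_sum_le_sum_abs _ _).trans (Finset.sum_le_sum fun i _ => ?_)
        refine (Finset.abs_sum_le_sum_abs _ _).trans (Finset.sum_le_sum fun j _ => ?_)
        rw [abs_mul, abs_mul]
        gcongr
        exact abs_apply_le_linf A i j
    _ = linf A * (∑ i, |x i|) ^ 2 := by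
        rw [sq, Finset.sum_mul_sum, Finset.mul_sum]
        exact Finset.sum_congr rfl fun i _ => by rw [Finset.mul_sum]; ring_nf
    _ ≤ linf A * (k * ∑ i, |x i| ^ 2) := by
        gcongr
        · exact linf_nonneg A
        · simpa using sq_sum_le_card_mul_sum_sq (s := Finset.univ) (f := fun i => |x i|)
    _ = k * linf A * (x ⬝ᵥ x) := by simp [dotProduct, sq, mul_assoc, mul_left_comm]

lemma mul_dotProduct_le_of_linf_sub {A X : Matrix (Fin k) (Fin k) ℝ} {μ : ℝ}
    (hX : ∀ x, μ * (x ⬝ᵥ x) ≤ x ⬝ᵥ X *ᵥ x) (x : Fin k → ℝ) :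
    (μ - k * linf (A - X)) * (x ⬝ᵥ x) ≤ x ⬝ᵥ A *ᵥ x := by
  have hsplit : x ⬝ᵥ A *ᵥ x = x ⬝ᵥ X *ᵥ x + x ⬝ᵥ (A - X) *ᵥ x := by
    rw [sub_mulVec, dotProduct_sub]; ring
  linarith [hX x, neg_abs_le (x ⬝ᵥ (A - X) *ᵥ x), abs_dotProduct_mulVec_le (A - X) x]

end EntrywiseNorm

section Rayleigh

variable {k : ℕ}

lemma isCompact_setOf_dotProduct_self_eq_one : IsCompact {x : Fin k → ℝ | x ⬝ᵥ x = 1} := by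
  refine (isCompact_univ_pi fun _ => isCompact_Icc (a := (-1 : ℝ)) (b := 1)).of_isClosed_subset
    (isClosed_eq (by fun_prop) continuous_const) fun x hx i _ => ?_
  have hxi : x i * x i ≤ 1 :=
    hx ▸ Finset.single_le_sum (f := fun j => x j * x j) (fun j _ => mul_self_nonneg _)
      (Finset.mem_univ i)
  exact abs_le.mp (abs_le_one_iff_mul_self_le_one.mpr hxi)

lemma isCompact_image_dotProduct_mulVec (A : Matrix (Fin k) (Fin k) ℝ) :
    IsCompact ((fun x => x ⬝ᵥ A *ᵥ x) '' {x : Fin k → ℝ | x ⬝ᵥ x = 1}) :=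
  isCompact_setOf_dotProduct_self_eq_one.image (by fun_prop)

lemma setOf_rayleigh_eq_image (A : Matrix (Fin k) (Fin k) ℝ) :
    {c : ℝ | ∃ x : Fin k → ℝ, ∑ i, (x i) ^ 2 = 1 ∧ c = ∑ i, ∑ j, x i * A i j * x j} =
      (fun x => x ⬝ᵥ A *ᵥ x) '' {x | x ⬝ᵥ x = 1} := by
  ext c
  simp [dotProduct, mulVec, sq, Finset.mul_sum, mul_assoc, eq_comm]

lemma lamMin_le_dotProduct_mulVec (A : Matrix (Fin k) (Fin k) ℝ) {x : Fin k → ℝ}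
    (hx : x ⬝ᵥ x = 1) : lamMin A ≤ x ⬝ᵥ A *ᵥ x := by
  rw [lamMin, setOf_rayleigh_eq_image]
  exact csInf_le (isCompact_image_dotProduct_mulVec A).bddBelow ⟨x, hx, rfl⟩

lemma diag_le_lamMax (A : Matrix (Fin k) (Fin k) ℝ) (i : Fin k) : A i i ≤ lamMax A := by
  rw [lamMax, setOf_rayleigh_eq_image]
  simpa using le_csSup (isCompact_image_dotProduct_mulVec A).bddAbove
    ⟨Pi.single i 1, by simp, rfl⟩

lemma lamMin_mul_dotProduct_le (A : Matrix (Fin k) (Fin k) ℝ) (x : Fin k → ℝ) :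
    lamMin A * (x ⬝ᵥ x) ≤ x ⬝ᵥ A *ᵥ x := by
  rcases eq_or_ne x 0 with rfl | hx
  · simp
  have hpos : 0 < x ⬝ᵥ x := by
    simpa using dotProduct_self_star_pos_iff.mpr hx
  set t := Real.sqrt (x ⬝ᵥ x)
  have ht : 0 < t := Real.sqrt_pos.mpr hpos
  have htt : t * t = x ⬝ᵥ x := Real.mul_self_sqrt hpos.le
  have hunit : t⁻¹ • x ⬝ᵥ t⁻¹ • x = 1 := by
    simp only [dotProduct_smul, smul_dotProduct, smul_eq_mul, ← htt]
    field_simp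
  have := lamMin_le_dotProduct_mulVec A hunit
  simp only [mulVec_smul, dotProduct_smul, smul_dotProduct, smul_eq_mul] at this
  rw [← htt]
  have := mul_le_mul_of_nonneg_left this (mul_self_nonneg t)
  field_simp at this
  linarith

lemma lamMin_pos [NeZero k] {A : Matrix (Fin k) (Fin k) ℝ} (hA : A.PosDef) : 0 < lamMin A := by
  have hne : ((fun x => x ⬝ᵥ A *ᵥ x) '' {x : Fin k → ℝ | x ⬝ᵥ x = 1}).Nonempty :=
    ⟨_, Set.mem_image_of_mem _ (show (Pi.single 0 1 : Fin k → ℝ) ⬝ᵥ Pi.single 0 1 = 1 by simp)⟩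
  obtain ⟨x, hx, hmin⟩ := (isCompact_image_dotProduct_mulVec A).sInf_mem hne
  have hx0 : x ≠ 0 := by rintro rfl; simp at hx
  rw [lamMin, setOf_rayleigh_eq_image, ← hmin]
  simpa using hA.dotProduct_mulVec_pos hx0

lemma inv_mul_dotProduct_le_of_inv_lamMin_le {A : Matrix (Fin k) (Fin k) ℝ} (hA : A.PosDef)
    {M : ℝ} (h : (lamMin A)⁻¹ ≤ M) (x : Fin k → ℝ) : M⁻¹ * (x ⬝ᵥ x) ≤ x ⬝ᵥ A *ᵥ x := by
  rcases eq_or_ne x 0 with rfl | hx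
  · simp
  have : NeZero k := ⟨by rintro rfl; exact hx (Subsingleton.elim _ _)⟩
  have hle : M⁻¹ ≤ lamMin A := inv_le_of_inv_le₀ (lamMin_pos hA) h
  exact (mul_le_mul_of_nonneg_right hle (by simpa using dotProduct_self_star_nonneg x)).trans
    (lamMin_mul_dotProduct_le A x)

end Rayleigh

section QuadraticLowerBound

variable {n : Type*} [Fintype n] {A : Matrix n n ℝ} {μ : ℝ}

lemma posDef_of_mul_dotProduct_le (hA : A.IsHermitian) (hμ : 0 < μ)
    (h : ∀ x, μ * (x ⬝ᵥ x) ≤ x ⬝ᵥ A *ᵥ x) : A.PosDef :=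
  .of_dotProduct_mulVec_pos hA fun x hx => by
    simpa using (mul_pos hμ (by simpa using dotProduct_self_star_pos_iff.mpr hx)).trans_le (h x)

lemma dotProduct_inv_mulVec_le [DecidableEq n] (hA : IsUnit A.det) (hμ : 0 < μ)
    (h : ∀ x, μ * (x ⬝ᵥ x) ≤ x ⬝ᵥ A *ᵥ x) (w : n → ℝ) :
    w ⬝ᵥ A⁻¹ *ᵥ w ≤ (w ⬝ᵥ w) / μ := by
  set z := A⁻¹ *ᵥ w
  have hAz : A *ᵥ z = w := by simp [z, mulVec_mulVec, mul_nonsing_inv A hA]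
  have hz : μ * (z ⬝ᵥ z) ≤ w ⬝ᵥ z := by simpa [hAz, dotProduct_comm] using h z
  -- expand `0 ≤ ‖w - μ z‖²` and use `μ² ‖z‖² ≤ μ ⟪w, z⟫`
  have hsq : 0 ≤ (w - μ • z) ⬝ᵥ (w - μ • z) := by
    simpa using dotProduct_self_star_nonneg (w - μ • z)
  simp only [sub_dotProduct, dotProduct_sub, smul_dotProduct, dotProduct_smul, smul_eq_mul,
    dotProduct_comm z w] at hsq
  rw [le_div_iff₀ hμ]
  nlinarith

end QuadraticLowerBound

lemma Matrix.PosSemidef.abs_apply_le {n : Type*} [Fintype n] [DecidableEq n]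
    {S : Matrix n n ℝ} (hS : S.PosSemidef) (i j : n) : |S i j| ≤ (S i i + S j j) / 2 := by
  have hsymm : S j i = S i j := hS.isHermitian.apply i j
  have hquad (c : ℝ) : 0 ≤ S i i + 2 * c * S i j + c ^ 2 * S j j := by
    have := hS.dotProduct_mulVec_nonneg (Pi.single i 1 + c • Pi.single j 1)
    simp only [star_trivial, mulVec_add, mulVec_single, MulOpposite.op_one, one_smul, mulVec_smul,
      dotProduct_add, add_dotProduct, single_dotProduct, col_apply, one_mul, smul_dotProduct, hsymm,
      smul_eq_mul, dotProduct_smul] at this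
    linarith
  rw [abs_le]
  constructor <;> linarith [hquad 1, hquad (-1)]

lemma mul_mul_transpose_apply_self {d r : ℕ} (Δ : Matrix (Fin d) (Fin r) ℝ)
    (B : Matrix (Fin r) (Fin r) ℝ) (i : Fin d) : (Δ * B * Δᵀ) i i = Δ i ⬝ᵥ B *ᵥ Δ i := by
  rw [dotProduct_mulVec, mul_apply]
  simp [dotProduct, vecMul, mul_apply, mul_comm]

lemma linf_mul_inv_mul_transpose_le {d r : ℕ} (Δ : Matrix (Fin d) (Fin r) ℝ)
    {A : Matrix (Fin r) (Fin r) ℝ} (hA : A.IsHermitian) {μ : ℝ} (hμ : 0 < μ)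
    (h : ∀ x, μ * (x ⬝ᵥ x) ≤ x ⬝ᵥ A *ᵥ x) :
    linf (Δ * A⁻¹ * Δᵀ) ≤ r * linf Δ ^ 2 / μ := by
  have hApd := posDef_of_mul_dotProduct_le hA hμ h
  have hS : (Δ * A⁻¹ * Δᵀ).PosSemidef := by
    simpa using hApd.inv.posSemidef.mul_mul_conjTranspose_same Δ
  have hdiag (i : Fin d) : (Δ * A⁻¹ * Δᵀ) i i ≤ r * linf Δ ^ 2 / μ := by
    rw [mul_mul_transpose_apply_self]
    refine (dotProduct_inv_mulVec_le ((isUnit_iff_isUnit_det A).mp hApd.isUnit) hμ h _).trans ?_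
    gcongr
    exact dotProduct_row_self_le Δ i
  refine linf_le (by have := linf_nonneg Δ; positivity) fun i j => ?_
  linarith [hS.abs_apply_le i j, hdiag i, hdiag j]

lemma mul_inv_mul_transpose_eq {m n : Type*} [Fintype n] [DecidableEq n] {A : Matrix n n ℝ}
    (hA : IsUnit A.det) (hAs : Aᵀ = A) (C B : Matrix m n ℝ) :
    (C - B * A) * A⁻¹ * (C - B * A)ᵀ =
      C * A⁻¹ * A * (C * A⁻¹)ᵀ - (C * Bᵀ + B * Cᵀ - B * A * Bᵀ) := by
  have hinv : (A⁻¹)ᵀ = A⁻¹ := by rw [transpose_nonsing_inv, hAs]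
  simp only [transpose_sub, transpose_mul, hAs, hinv, Matrix.sub_mul, Matrix.mul_sub,
    Matrix.mul_assoc, mul_nonsing_inv_cancel_left _ _ hA, nonsing_inv_mul_cancel_left _ _ hA,
    nonsing_inv_mul A hA, Matrix.mul_one]
  abel

lemma linf_schurComplement_sub_le {d r : ℕ} {A Adag : Matrix (Fin r) (Fin r) ℝ}
    (hA : A.IsHermitian) (hAdag : IsUnit A.det → Adag = A⁻¹) (C B : Matrix (Fin d) (Fin r) ℝ)
    (Y : Matrix (Fin d) (Fin d) ℝ) {μ : ℝ} (hμ : 0 < μ) (h : ∀ x, μ * (x ⬝ᵥ x) ≤ x ⬝ᵥ A *ᵥ x) :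
    linf ((Y - C * Adag * A * (C * Adag)ᵀ) - (Y - C * Bᵀ - B * Cᵀ + B * A * Bᵀ)) ≤
      r * linf (C - B * A) ^ 2 / μ := by
  have hdet : IsUnit A.det :=
    (isUnit_iff_isUnit_det A).mp (posDef_of_mul_dotProduct_le hA hμ h).isUnit
  have hAs : Aᵀ = A := by simpa using hA.eq
  have hsq : (Y - C * Bᵀ - B * Cᵀ + B * A * Bᵀ) - (Y - C * A⁻¹ * A * (C * A⁻¹)ᵀ) =
      (C - B * A) * A⁻¹ * (C - B * A)ᵀ := by
    rw [mul_inv_mul_transpose_eq hdet hAs]; abel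
  rw [linf_sub_comm, hAdag hdet, hsq]
  exact linf_mul_inv_mul_transpose_le _ hA hμ h

lemma linf_schurComplement_sub_le_of_estimates {d r : ℕ} {X A Adag : Matrix (Fin r) (Fin r) ℝ}
    {C B : Matrix (Fin d) (Fin r) ℝ} {Y Z : Matrix (Fin d) (Fin d) ℝ}
    (hX : X.PosDef) (hA : A.IsHermitian) (hAdag : IsUnit A.det → Adag = A⁻¹)
    {M l ε : ℝ} (hM : 0 < M) (hl : 0 ≤ l) (hXM : |linf X + (lamMin X)⁻¹| ≤ M)
    (hAX : linf (A - X) ≤ l) (hrl : |r * l| ≤ min (1 / 2) (ε / 4) / M)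
    (hCB : linf (C - B * A) ≤ l) (hZ : linf ((Y - C * Bᵀ - B * Cᵀ + B * A * Bᵀ) - Z) ≤ ε / 2 * l) :
    linf ((Y - C * Adag * A * (C * Adag)ᵀ) - Z) ≤ ε * l := by
  have hXM' : (lamMin X)⁻¹ ≤ M :=
    (le_add_of_nonneg_left (linf_nonneg X)).trans ((le_abs_self _).trans hXM)
  have hrl₁ : r * l ≤ 1 / 2 / M :=
    (le_abs_self _).trans (hrl.trans (by gcongr; exact min_le_left _ _))
  have hrl₂ : r * l ≤ ε / 4 / M :=
    (le_abs_self _).trans (hrl.trans (by gcongr; exact min_le_right _ _))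
  have hAlow (x : Fin r → ℝ) : (2 * M)⁻¹ * (x ⬝ᵥ x) ≤ x ⬝ᵥ A *ᵥ x := by
    refine le_trans ?_
      (mul_dotProduct_le_of_linf_sub (inv_mul_dotProduct_le_of_inv_lamMin_le hX hXM') x)
    gcongr
    · simpa using dotProduct_self_star_nonneg x
    · calc (2 * M)⁻¹ = M⁻¹ - 1 / 2 / M := by field_simp; ring
        _ ≤ M⁻¹ - r * linf (A - X) := by
          gcongr; exact (mul_le_mul_of_nonneg_left hAX (by positivity)).trans hrl₁
  have hcomp := linf_schurComplement_sub_le hA hAdag C B Y (by positivity) hAlow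
  have hquad : r * linf (C - B * A) ^ 2 / (2 * M)⁻¹ ≤ ε / 2 * l := by
    calc r * linf (C - B * A) ^ 2 / (2 * M)⁻¹ = r * linf (C - B * A) ^ 2 * (2 * M) :=
          div_inv_eq_mul _ _
      _ ≤ r * l ^ 2 * (2 * M) := by have := linf_nonneg (C - B * A); gcongr
      _ = 2 * M * (r * l) * l := by ring
      _ ≤ 2 * M * (ε / 4 / M) * l := by gcongr
      _ = ε / 2 * l := by field_simp; ring
  linarith [linf_sub_le_add (Y - C * Adag * A * (C * Adag)ᵀ) (Y - C * Bᵀ - B * Cᵀ + B * A * Bᵀ) Z]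

lemma diag_pos_of_linf_sub_le {d : ℕ} {Zhat Z : Matrix (Fin d) (Fin d) ℝ} (hZ : Z.PosDef)
    {M l : ℝ} (hM : 0 < M) (hZM : |lamMax Z + (lamMin Z)⁻¹| ≤ M) (hl : |l| ≤ (2 * M)⁻¹)
    (hZhat : linf (Zhat - Z) ≤ l) (i : Fin d) : 0 < Zhat i i := by
  have hZii : 0 < Z i i := hZ.diag_pos
  have hZM' : (lamMin Z)⁻¹ ≤ M :=
    (le_add_of_nonneg_left (hZii.trans_le (diag_le_lamMax Z i)).le).trans
      ((le_abs_self _).trans hZM)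
  have hlow : M⁻¹ ≤ Z i i := by
    simpa using inv_mul_dotProduct_le_of_inv_lamMin_le hZ hZM' (Pi.single i 1)
  have hpert : |Zhat i i - Z i i| ≤ (2 * M)⁻¹ :=
    (abs_apply_le_linf (Zhat - Z) i i).trans (hZhat.trans ((le_abs_self l).trans hl))
  have : (2 * M)⁻¹ < M⁻¹ := by gcongr; linarith
  linarith [neg_abs_le (Zhat i i - Z i i)]

section Probability

variable {Ω : ℕ → Type*} [∀ n, MeasurableSpace (Ω n)] {P : ∀ n, Measure (Ω n)}

lemma tendsto_measure_setOf_not_of_ae {p : ∀ n, Ω n → Prop} (h : ∀ n, ∀ᵐ ω ∂P n, p n ω) :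
    Tendsto (fun n => (P n {ω | ¬ p n ω}).toReal) atTop (𝓝 0) := by
  simp [ae_iff.mp (h _)]

lemma tendsto_measure_union {S T : ∀ n, Set (Ω n)}
    (hS : Tendsto (fun n => (P n (S n)).toReal) atTop (𝓝 0))
    (hT : Tendsto (fun n => (P n (T n)).toReal) atTop (𝓝 0)) :
    Tendsto (fun n => (P n (S n ∪ T n)).toReal) atTop (𝓝 0) :=
  squeeze_zero (fun _ => ENNReal.toReal_nonneg) (fun n => measureReal_union_le _ _)
    (by rw [← zero_add (0 : ℝ)]; exact hS.add hT)

variable [∀ n, IsProbabilityMeasure (P n)]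

lemma IsLittleOp.mono {Z Z' a : ∀ n, Ω n → ℝ} (h : IsLittleOp P Z a)
    (hle : ∀ n ω, |Z' n ω| ≤ |Z n ω|) : IsLittleOp P Z' a := fun ε hε =>
  squeeze_zero (fun _ => ENNReal.toReal_nonneg)
    (fun n => measureReal_mono fun ω hω => lt_of_lt_of_le hω (hle n ω)) (h ε hε)

lemma tendsto_measure_of_forall_limsup_le {S : ∀ n, Set (Ω n)}
    (h : ∀ δ > 0, ∃ T U : ∀ n, Set (Ω n),
      limsup (fun n => (P n (T n)).toReal) atTop ≤ δ ∧
      Tendsto (fun n => (P n (U n)).toReal) atTop (𝓝 0) ∧ ∀ n, S n ⊆ T n ∪ U n) :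
    Tendsto (fun n => (P n (S n)).toReal) atTop (𝓝 0) := by
  refine tendsto_order.2 ⟨fun b hb => .of_forall fun n => hb.trans_le ENNReal.toReal_nonneg,
    fun b hb => ?_⟩
  obtain ⟨T, U, hT, hU, hSTU⟩ := h (b / 3) (by positivity)
  have hT' : ∀ᶠ n in atTop, (P n (T n)).toReal < 2 * b / 3 :=
    eventually_lt_of_limsup_lt (hT.trans_lt (by linarith))
      (isBoundedUnder_of ⟨1, fun n => measureReal_le_one⟩)
  filter_upwards [hT', (tendsto_order.1 hU).2 (b / 3) (by positivity)] with n hTn hUn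
  calc (P n (S n)).toReal ≤ (P n (T n)).toReal + (P n (U n)).toReal :=
        (measureReal_mono (hSTU n)).trans (measureReal_union_le _ _)
    _ < b := by linarith

lemma tendsto_measure_of_tendsto_measure_compl {S : ∀ n, Set (Ω n)}
    (h : Tendsto (fun n => (P n (S n)ᶜ).toReal) atTop (𝓝 0)) :
    Tendsto (fun n => (P n (S n)).toReal) atTop (𝓝 1) := by
  refine tendsto_of_tendsto_of_tendsto_of_le_of_le (by simpa using h.const_sub 1)
    tendsto_const_nhds (fun n => ?_) fun n => measureReal_le_one
  -- no measurability is assumed, so only subadditivity is available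
  have := measureReal_union_le (μ := P n) (S n) (S n)ᶜ
  rw [Set.union_compl_self, probReal_univ] at this
  change 1 ≤ (P n (S n)).toReal + (P n (S n)ᶜ).toReal at this
  linarith

lemma tendsto_measure_forall_diag_pos {d : ℕ → ℕ}
    {Zhat Z : ∀ n, Ω n → Matrix (Fin (d n)) (Fin (d n)) ℝ} {l : ∀ n, Ω n → ℝ}
    (hZ : ∀ n, ∀ᵐ ω ∂P n, (Z n ω).PosDef)
    (hZbound : IsBigOp P (fun n ω => lamMax (Z n ω) + (lamMin (Z n ω))⁻¹) (fun _ _ => 1))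
    (hl : IsLittleOp P l (fun _ _ => 1))
    (hZhat : IsLittleOp P (fun n ω => linf (Zhat n ω - Z n ω)) l) :
    Tendsto (fun n => (P n {ω | ∀ i, 0 < Zhat n ω i i}).toReal) atTop (𝓝 1) := by
  refine tendsto_measure_of_tendsto_measure_compl <| tendsto_measure_of_forall_limsup_le
    fun δ hδ => ?_
  obtain ⟨M, hM, hlim⟩ := hZbound δ hδ
  refine ⟨_, _, hlim, tendsto_measure_union (hZhat 1 one_pos) <| tendsto_measure_union
    (hl _ (by positivity : 0 < (2 * M)⁻¹)) (tendsto_measure_setOf_not_of_ae hZ), fun n ω hω => ?_⟩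
  by_contra hgood
  simp only [Set.mem_union, Set.mem_ofPred_eq, not_or, not_lt, not_not, abs_linf, one_mul,
    mul_one] at hgood
  obtain ⟨hZM, hZhatZ, hln, hZpd⟩ := hgood
  exact hω fun i => diag_pos_of_linf_sub_le hZpd hM hZM hln hZhatZ i

end Probability

theorem sigmaZhat_consistency_general
    {Ω : ℕ → Type*} [∀ n, MeasurableSpace (Ω n)]
    (P : ∀ n, Measure (Ω n)) [∀ n, IsProbabilityMeasure (P n)]
    (d r : ℕ → ℕ)
    -- the (non-random) factor loading matrices β
    (β : ∀ n, Matrix (Fin (d n)) (Fin (r n)) ℝ)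
    -- the random matrices Σ_X, Σ_Z, a.s. positive definite
    (SigX : ∀ n, Ω n → Matrix (Fin (r n)) (Fin (r n)) ℝ)
    (hSigX : ∀ n, ∀ᵐ ω ∂(P n), (SigX n ω).PosDef)
    (SigZ : ∀ n, Ω n → Matrix (Fin (d n)) (Fin (d n)) ℝ)
    (hSigZ : ∀ n, ∀ᵐ ω ∂(P n), (SigZ n ω).PosDef)
    -- the estimators Σ̂_{Y,n}, Σ̂_{X,n}, Σ̂_{YX,n} and Σ̂_{X,n}^†
    (SigYhat : ∀ n, Ω n → Matrix (Fin (d n)) (Fin (d n)) ℝ)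
    (SigXhat : ∀ n, Ω n → Matrix (Fin (r n)) (Fin (r n)) ℝ)
    (hSigXhat : ∀ n ω, (SigXhat n ω).PosSemidef)
    (SigYXhat : ∀ n, Ω n → Matrix (Fin (d n)) (Fin (r n)) ℝ)
    (SigXdag : ∀ n, Ω n → Matrix (Fin (r n)) (Fin (r n)) ℝ)
    (hSigXdag : ∀ n ω, (SigXdag n ω).PosDef ∧
      (IsUnit (SigXhat n ω).det → SigXdag n ω = (SigXhat n ω)⁻¹))
    -- β̂_n := Σ̂_{YX,n} Σ̂_{X,n}^†
    (betaHat : ∀ n, Ω n → Matrix (Fin (d n)) (Fin (r n)) ℝ)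
    (hbetaHat : ∀ n ω, betaHat n ω = SigYXhat n ω * SigXdag n ω)
    -- Σ̂_{Z,n} and Σ̆_{Z,n}
    (SigZhat : ∀ n, Ω n → Matrix (Fin (d n)) (Fin (d n)) ℝ)
    (hSigZhat : ∀ n ω, SigZhat n ω =
      SigYhat n ω - betaHat n ω * SigXhat n ω * (betaHat n ω)ᵀ)
    (SigZbreve : ∀ n, Ω n → Matrix (Fin (d n)) (Fin (d n)) ℝ)
    (hSigZbreve : ∀ n ω, SigZbreve n ω =
      SigYhat n ω - SigYXhat n ω * (β n)ᵀ - β n * (SigYXhat n ω)ᵀ +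
        β n * SigXhat n ω * (β n)ᵀ)
    -- [C2]
    (hC2 : IsBigOp P (fun n ω => lamMax (SigZ n ω) + (lamMin (SigZ n ω))⁻¹) (fun _ _ => 1))
    -- [C3]
    (hC3 : IsBigOp P (fun n ω => linf (SigX n ω) + (lamMin (SigX n ω))⁻¹) (fun _ _ => 1))
    -- [C4]
    (s : ℕ → ℝ) (hs : ∀ n, 1 ≤ s n)
    -- the penalty parameters λ_n, positive random variables
    (lam : ∀ n, Ω n → ℝ) (hlam : ∀ n ω, 0 < lam n ω)
    -- [D1]
    (hD1a : IsLittleOp P (fun n ω => linf (SigXhat n ω - SigX n ω)) lam)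
    (hD1b : IsLittleOp P (fun n ω => linf (SigYXhat n ω - β n * SigXhat n ω)) lam)
    (hD1c : IsLittleOp P (fun n ω => linf (SigZbreve n ω - SigZ n ω)) lam)
    -- [D2]
    (hD2 : IsLittleOp P (fun n ω => (s n + r n) * lam n ω) (fun _ _ => 1)) :
    IsLittleOp P (fun n ω => linf (SigZhat n ω - SigZ n ω)) lam ∧
    Filter.Tendsto (fun n => ((P n) {ω | ∀ i, 0 < SigZhat n ω i i}).toReal)
      Filter.atTop (nhds 1) := by
  have hsr (n : ℕ) : 1 ≤ |s n + r n| ∧ |(r n : ℝ)| ≤ |s n + r n| := by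
    have := hs n
    rw [Nat.abs_cast, abs_of_pos (by positivity)]
    constructor <;> linarith
  have hrl : IsLittleOp P (fun n ω => (r n : ℝ) * lam n ω) (fun _ _ => 1) :=
    hD2.mono fun n ω => by
      rw [abs_mul, abs_mul]; exact mul_le_mul_of_nonneg_right (hsr n).2 (abs_nonneg _)
  have hl : IsLittleOp P lam (fun _ _ => 1) :=
    hD2.mono fun n ω => by rw [abs_mul]; exact le_mul_of_one_le_left (abs_nonneg _) (hsr n).1
  have hconsistent : IsLittleOp P (fun n ω => linf (SigZhat n ω - SigZ n ω)) lam := by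
    intro ε hε
    refine tendsto_measure_of_forall_limsup_le fun δ hδ => ?_
    obtain ⟨M, hM, hlim⟩ := hC3 δ hδ
    refine ⟨_, _, hlim, tendsto_measure_union (hD1a 1 one_pos) <| tendsto_measure_union
      (hrl (min (1 / 2) (ε / 4) / M) (by positivity)) <| tendsto_measure_union (hD1b 1 one_pos) <|
      tendsto_measure_union (hD1c (ε / 2) (by positivity)) (tendsto_measure_setOf_not_of_ae hSigX),
      fun n ω hω => ?_⟩
    by_contra hgood
    simp only [Set.mem_union, Set.mem_ofPred_eq, not_or, not_lt, not_not, abs_linf, one_mul,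
      mul_one] at hω hgood
    obtain ⟨hXM, hAX, hrln, hCB, hZ, hX⟩ := hgood
    rw [hSigZhat, hbetaHat] at hω
    rw [hSigZbreve] at hZ
    exact hω.not_ge <| linf_schurComplement_sub_le_of_estimates hX (hSigXhat n ω).isHermitian
      (hSigXdag n ω).2 hM (hlam n ω).le hXM hAX hrln hCB hZ
  exact ⟨hconsistent, tendsto_measure_forall_diag_pos hSigZ hC2 hl hconsistent⟩

/-- Consistency of Σ̂_{Z,n} and asymptotic positivity of its diagonal (Lemma C.3). -/
theorem sigmaZhat_consistency
    {Ω : ℕ → Type*} [∀ n, MeasurableSpace (Ω n)]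
    (P : ∀ n, Measure (Ω n)) [∀ n, IsProbabilityMeasure (P n)]
    (d r : ℕ → ℕ) (hd : ∀ n, 2 ≤ d n)
    -- the (non-random) factor loading matrices β
    (β : ∀ n, Matrix (Fin (d n)) (Fin (r n)) ℝ)
    -- the random matrices Σ_X, Σ_Z, a.s. positive definite
    (SigX : ∀ n, Ω n → Matrix (Fin (r n)) (Fin (r n)) ℝ)
    (hSigX : ∀ n, ∀ᵐ ω ∂(P n), (SigX n ω).PosDef)
    (SigZ : ∀ n, Ω n → Matrix (Fin (d n)) (Fin (d n)) ℝ)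
    (hSigZ : ∀ n, ∀ᵐ ω ∂(P n), (SigZ n ω).PosDef)
    -- Σ_Y := β Σ_X βᵀ + Σ_Z
    (SigY : ∀ n, Ω n → Matrix (Fin (d n)) (Fin (d n)) ℝ)
    (hSigY : ∀ n ω, SigY n ω = β n * SigX n ω * (β n)ᵀ + SigZ n ω)
    -- the estimators Σ̂_{Y,n}, Σ̂_{X,n}, Σ̂_{YX,n} and Σ̂_{X,n}^†
    (SigYhat : ∀ n, Ω n → Matrix (Fin (d n)) (Fin (d n)) ℝ)
    (hSigYhat : ∀ n ω, (SigYhat n ω).IsSymm)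
    (SigXhat : ∀ n, Ω n → Matrix (Fin (r n)) (Fin (r n)) ℝ)
    (hSigXhat : ∀ n ω, (SigXhat n ω).PosSemidef)
    (SigYXhat : ∀ n, Ω n → Matrix (Fin (d n)) (Fin (r n)) ℝ)
    (SigXdag : ∀ n, Ω n → Matrix (Fin (r n)) (Fin (r n)) ℝ)
    (hSigXdag : ∀ n ω, (SigXdag n ω).PosDef ∧
      (IsUnit (SigXhat n ω).det → SigXdag n ω = (SigXhat n ω)⁻¹))
    -- β̂_n := Σ̂_{YX,n} Σ̂_{X,n}^†
    (betaHat : ∀ n, Ω n → Matrix (Fin (d n)) (Fin (r n)) ℝ)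
    (hbetaHat : ∀ n ω, betaHat n ω = SigYXhat n ω * SigXdag n ω)
    -- Σ̂_{Z,n} and Σ̆_{Z,n}
    (SigZhat : ∀ n, Ω n → Matrix (Fin (d n)) (Fin (d n)) ℝ)
    (hSigZhat : ∀ n ω, SigZhat n ω =
      SigYhat n ω - betaHat n ω * SigXhat n ω * (betaHat n ω)ᵀ)
    (SigZbreve : ∀ n, Ω n → Matrix (Fin (d n)) (Fin (d n)) ℝ)
    (hSigZbreve : ∀ n ω, SigZbreve n ω =
      SigYhat n ω - SigYXhat n ω * (β n)ᵀ - β n * (SigYXhat n ω)ᵀ +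
        β n * SigXhat n ω * (β n)ᵀ)
    -- [C1]
    (hC1 : IsBigOp P (fun n ω => linf (SigY n ω)) (fun _ _ => 1))
    (hC1' : ∃ C : ℝ, ∀ n, linf (β n) ≤ C)
    -- [C2]
    (hC2 : IsBigOp P (fun n ω => lamMax (SigZ n ω) + (lamMin (SigZ n ω))⁻¹) (fun _ _ => 1))
    -- [C3]
    (hC3 : IsBigOp P (fun n ω => linf (SigX n ω) + (lamMin (SigX n ω))⁻¹) (fun _ _ => 1))
    -- [C4]
    (s : ℕ → ℝ) (hs : ∀ n, 1 ≤ s n)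
    (hC4 : IsBigOp P (fun n ω => (spars ((SigZ n ω)⁻¹) : ℝ)) (fun n _ => s n))
    -- the penalty parameters λ_n, positive random variables
    (lam : ∀ n, Ω n → ℝ) (hlam : ∀ n ω, 0 < lam n ω)
    -- [D1]
    (hD1a : IsLittleOp P (fun n ω => linf (SigXhat n ω - SigX n ω)) lam)
    (hD1b : IsLittleOp P (fun n ω => linf (SigYXhat n ω - β n * SigXhat n ω)) lam)
    (hD1c : IsLittleOp P (fun n ω => linf (SigZbreve n ω - SigZ n ω)) lam)
    -- [D2]
    (hD2 : IsLittleOp P (fun n ω => (s n + r n) * lam n ω) (fun _ _ => 1))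
    -- [D3]
    (hD3 : Filter.Tendsto (fun n => ((P n) {ω |
        (Matrix.fromBlocks (SigXhat n ω) ((SigYXhat n ω)ᵀ)
          (SigYXhat n ω) (SigYhat n ω)).PosSemidef}).toReal)
      Filter.atTop (nhds 1)) :
    IsLittleOp P (fun n ω => linf (SigZhat n ω - SigZ n ω)) lam ∧
    Filter.Tendsto (fun n => ((P n) {ω | ∀ i, 0 < SigZhat n ω i i}).toReal)
      Filter.atTop (nhds 1) :=
  sigmaZhat_consistency_general P d r β SigX hSigX SigZ hSigZ SigYhat SigXhat hSigXhat SigYXhat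
    SigXdag hSigXdag betaHat hbetaHat SigZhat hSigZhat SigZbreve hSigZbreve hC2 hC3 s hs lam hlam
    hD1a hD1b hD1c hD2

end
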